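/- For f₁(z) = z and f₂(z) = f(z²)/z with f a formal power series with f(0)=0 and f'(0)≠0, the odd square root h of f₁f₂ = f(z²) satisfies: the compositional inverse h̄ of h satisfies h̄² = f̄(z²), where f̄ is the compositional inverse of f. -/

import Mathlib

open PowerSeries

variable {K : Type*} [Field K]

/-- Composition (substitution) of formal power series: `pcomp A f = A ∘ f`,
intended for `f` with zero constant term, where `coeff n (f ^ k) = 0` for `k > n`. -/
noncomputable def pcomp (A f : PowerSeries K) : PowerSeries K :=
  PowerSeries.mk fun n => ∑ k ∈ Finset.range (n + 1), coeff k A * coeff n (f ^ k)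

/-- A formal power series is even if all its odd coefficients vanish. -/
def IsEvenPS (g : PowerSeries K) : Prop := ∀ n : ℕ, Odd n → coeff n g = 0

/-- A formal power series is odd if all its even coefficients vanish. -/
def IsOddPS (f : PowerSeries K) : Prop := ∀ n : ℕ, Even n → coeff n f = 0

lemma coeff_pow_of_lt (f : PowerSeries K) (hf : constantCoeff f = 0)
    {n k : ℕ} (h : n < k) : coeff n (f ^ k) = 0 := by
  have hd : (X : PowerSeries K) ^ k ∣ f ^ k :=
    pow_dvd_pow_of_dvd (PowerSeries.X_dvd_iff.mpr hf) k
  exact (PowerSeries.X_pow_dvd_iff.mp hd) n h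

lemma coeff_pcomp (A f : PowerSeries K) (n : ℕ) :
    coeff n (pcomp A f) = ∑ k ∈ Finset.range (n + 1), coeff k A * coeff n (f ^ k) := by
  simp [pcomp]

/-- Core lemma: coefficient of a polynomial evaluated at a power series with zero constant term. -/
lemma coeff_eval₂ (P : Polynomial K) (f : PowerSeries K) (hf : constantCoeff f = 0) (n : ℕ) :
    coeff n (P.eval₂ (C) f) =
      ∑ k ∈ Finset.range (n + 1), P.coeff k * coeff n (f ^ k) := by
  set N := max (n + 1) (P.natDegree + 1) with hN
  have hdeg : P.natDegree < N := lt_of_lt_of_le (Nat.lt_succ_self _) (le_max_right _ _)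
  rw [Polynomial.eval₂_eq_sum_range' (C) hdeg f, map_sum]
  have h1 : ∀ k ∈ Finset.range N, coeff n (C (P.coeff k) * f ^ k)
      = P.coeff k * coeff n (f ^ k) := by
    intro k _; rw [coeff_C_mul]
  rw [Finset.sum_congr rfl h1]
  symm
  apply Finset.sum_subset
  · exact Finset.range_subset_range.mpr (le_max_left _ _)
  · intro k _ hk
    rw [Finset.mem_range, not_lt] at hk
    rw [coeff_pow_of_lt f hf (by omega), mul_zero]

lemma coeff_pcomp_eq (A f : PowerSeries K) (hf : constantCoeff f = 0) {n m : ℕ}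
    (hm : n < m) :
    coeff n (pcomp A f) = coeff n ((trunc m A).eval₂ (C) f) := by
  rw [coeff_pcomp, coeff_eval₂ _ f hf]
  apply Finset.sum_congr rfl
  intro k hk
  rw [Finset.mem_range] at hk
  rw [PowerSeries.coeff_trunc, if_pos (by omega)]

lemma pcomp_C (c : K) (f : PowerSeries K) : pcomp (C c) f = C c := by
  ext n
  rw [coeff_pcomp]
  rcases Nat.eq_zero_or_pos n with rfl | hn
  · simp
  · rw [Finset.sum_eq_single 0]
    · simp [coeff_C, Nat.pos_iff_ne_zero.mp hn]
    · intro k hk hk0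
      rw [coeff_C, if_neg hk0, zero_mul]
    · intro h; simp at h

lemma pcomp_one (f : PowerSeries K) : pcomp 1 f = 1 := by
  simpa using pcomp_C (1 : K) f

lemma pcomp_add (A B f : PowerSeries K) : pcomp (A + B) f = pcomp A f + pcomp B f := by
  ext n
  simp [coeff_pcomp, add_mul, Finset.sum_add_distrib]

lemma pcomp_mul (A B f : PowerSeries K) (hf : constantCoeff f = 0) :
    pcomp (A * B) f = pcomp A f * pcomp B f := by
  ext n
  have key : ∀ p ≤ n, ∀ D : PowerSeries K,
      coeff p (pcomp D f) = coeff p ((trunc (n+1) D).eval₂ (C) f) := by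
    intro p hp D
    rw [coeff_pcomp, coeff_eval₂ _ f hf]
    apply Finset.sum_congr rfl
    intro k hk
    rw [Finset.mem_range] at hk
    rw [PowerSeries.coeff_trunc, if_pos (by omega)]
  rw [key n le_rfl (A * B)]
  have htr : coeff n ((trunc (n+1) (A*B)).eval₂ (C) f)
      = coeff n ((trunc (n+1) A * trunc (n+1) B).eval₂ (C) f) := by
    rw [coeff_eval₂ _ f hf, coeff_eval₂ _ f hf]
    apply Finset.sum_congr rfl
    intro k hk
    rw [Finset.mem_range] at hk
    congr 1
    rw [PowerSeries.coeff_trunc, if_pos (by omega), PowerSeries.coeff_mul, Polynomial.coeff_mul]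
    apply Finset.sum_congr rfl
    intro x hx
    rw [Finset.HasAntidiagonal.mem_antidiagonal] at hx
    rw [PowerSeries.coeff_trunc, PowerSeries.coeff_trunc, if_pos (by omega), if_pos (by omega)]
  rw [htr, Polynomial.eval₂_mul, PowerSeries.coeff_mul, PowerSeries.coeff_mul]
  apply Finset.sum_congr rfl
  intro x hx
  rw [Finset.HasAntidiagonal.mem_antidiagonal] at hx
  rw [key x.1 (by omega) A, key x.2 (by omega) B]

/-- `pcomp · f` as a ring homomorphism, for `f` with zero constant term. -/
noncomputable def pcompHom (f : PowerSeries K) (hf : constantCoeff f = 0) :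
    PowerSeries K →+* PowerSeries K where
  toFun A := pcomp A f
  map_one' := pcomp_one f
  map_mul' A B := pcomp_mul A B f hf
  map_zero' := by ext n; simp [coeff_pcomp]
  map_add' A B := pcomp_add A B f

lemma constantCoeff_pcomp (A f : PowerSeries K) (hf : constantCoeff f = 0) :
    constantCoeff (pcomp A f) = constantCoeff A := by
  have := coeff_pcomp A f 0
  simp only [Finset.range_one, Finset.sum_singleton, pow_zero, coeff_zero_eq_constantCoeff] at *
  simpa using this

lemma pcomp_X_left (f : PowerSeries K) (hf : constantCoeff f = 0) : pcomp X f = f := by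
  ext n
  rw [coeff_pcomp]
  rcases Nat.eq_zero_or_pos n with rfl | hn
  · simpa using hf.symm
  · rw [Finset.sum_eq_single 1]
    · simp
    · intro k hk hk1
      rw [coeff_X, if_neg hk1, zero_mul]
    · simp; omega

lemma pcomp_assoc (A B g : PowerSeries K) (hB : constantCoeff B = 0)
    (hg : constantCoeff g = 0) :
    pcomp (pcomp A B) g = pcomp A (pcomp B g) := by
  have hBg : constantCoeff (pcomp B g) = 0 := by
    rw [constantCoeff_pcomp B g hg, hB]
  ext n
  set P := trunc (n + 1) A with hP
  -- LHS: coeff n depends only on coefficients ≤ n of (pcomp A B)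
  have step1 : coeff n (pcomp (pcomp A B) g) = coeff n (pcomp (P.eval₂ (C) B) g) := by
    rw [coeff_pcomp, coeff_pcomp]
    apply Finset.sum_congr rfl
    intro k hk
    rw [Finset.mem_range] at hk
    congr 1
    exact coeff_pcomp_eq A B hB (by omega)
  rw [step1]
  have step2 : pcomp (P.eval₂ (C) B) g = P.eval₂ (C) (pcomp B g) := by
    have := Polynomial.hom_eval₂ P (C) (pcompHom g hg) B
    simp only [pcompHom, RingHom.coe_mk, MonoidHom.coe_mk, OneHom.coe_mk] at this
    rw [this]
    congr 1
    ext c : 1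
    simp only [RingHom.comp_apply]
    exact pcomp_C c g
  rw [step2]
  exact (coeff_pcomp_eq A (pcomp B g) hBg (Nat.lt_succ_self n)).symm

/-- For f₁ = z, f₂ = f(z²)/z, the odd square root h of f(z²) has compositional
inverse h̄ satisfying h̄² = f̄(z²), where f̄ is the compositional inverse of f. -/
theorem stmt6 (f fbar h hbar : PowerSeries K)
    (hf0 : constantCoeff f = 0) (hf1 : coeff 1 f ≠ 0)
    (hfb0 : constantCoeff fbar = 0) (hfb1 : coeff 1 fbar ≠ 0)
    (hinv1 : pcomp f fbar = X) (hinv2 : pcomp fbar f = X)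
    (hh : IsOddPS h) (hh1 : coeff 1 h ≠ 0) (hsq : h ^ 2 = pcomp f (X ^ 2))
    (hb0 : constantCoeff hbar = 0) (hb1 : coeff 1 hbar ≠ 0)
    (hbar1 : pcomp h hbar = X) (hbar2 : pcomp hbar h = X) :
    hbar ^ 2 = pcomp fbar (X ^ 2) := by
  have hX2 : constantCoeff ((X : PowerSeries K) ^ 2) = 0 := by simp
  have hbar2_0 : constantCoeff (hbar ^ 2) = 0 := by
    rw [pow_two, map_mul, hb0, mul_zero]
  have e1 : pcomp (X ^ 2) hbar = hbar ^ 2 := by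
    rw [pow_two, pcomp_mul _ _ _ hb0, pcomp_X_left _ hb0, pow_two]
  have e2 : pcomp (h ^ 2) hbar = X ^ 2 := by
    rw [pow_two, pcomp_mul _ _ _ hb0, hbar1, pow_two]
  have e3 : pcomp f (hbar ^ 2) = X ^ 2 := by
    rw [← e2, hsq, pcomp_assoc f (X ^ 2) hbar hX2 hb0, e1]
  calc hbar ^ 2 = pcomp X (hbar ^ 2) := (pcomp_X_left _ hbar2_0).symm
    _ = pcomp (pcomp fbar f) (hbar ^ 2) := by rw [hinv2]
    _ = pcomp fbar (pcomp f (hbar ^ 2)) := pcomp_assoc fbar f (hbar ^ 2) hf0 hbar2_0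
    _ = pcomp fbar (X ^ 2) := by rw [e3]
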